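/- arXiv:2507.18909 — 2 statements merged into one kernel-verified Lean document; each statement's English description precedes it below -/
import Mathlib

section
/- Let E11 ∈ ℝ^{n1×n1} be invertible, A12 ∈ ℝ^{n1×n2} have full column rank with A12ᵀE11⁻¹A12 invertible, and Π = I_{n1} − A12(A12ᵀE11⁻¹A12)⁻¹A12ᵀE11⁻¹. Then for every positive integer k and every vector z ∈ ℝ^{n1^k}, one has Π^{⊗k} z = 0 if and only if z lies in the column space of M_k(A12), i.e. if and only if there exist vectors γ_1, …, γ_k with z = ∑_{i=1}^{k} (I_{n1}^{⊗(i−1)} ⊗ A12 ⊗ I_{n1}^{⊗(k−i)}) γ_i. -/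
/-!
The two facts about `Π` that matter are `Π A₁₂ = 0` and `1 - Π = A₁₂ Q` with
`Q = (A₁₂ᵀ E₁₁⁻¹ A₁₂)⁻¹ A₁₂ᵀ E₁₁⁻¹`. The first makes `Π^{⊗k}` kill every block
`I^{⊗(i-1)} ⊗ A₁₂ ⊗ I^{⊗(k-i)}`, since the `i`-th Kronecker factor of the product is `Π A₁₂`.
For the converse, if `Π^{⊗k} z = 0` then `z = (1 - Π^{⊗k}) z`, and the telescoping sum
`1 - Π^{⊗k} = ∑ᵢ Π^{⊗(i-1)} ⊗ (1 - Π) ⊗ I^{⊗(k-i)}` together with `1 - Π = A₁₂ Q` exhibits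
this vector in the column space of `M_k(A₁₂)`.
-/

open Matrix

noncomputable section

/-- Position-dependent Kronecker product of square matrices: the entry at
row `r` and column `c` is `∏ j, F j (r j) (c j)`. -/
def posKron {n k : ℕ} (F : Fin k → Matrix (Fin n) (Fin n) ℝ) :
    Matrix (Fin k → Fin n) (Fin k → Fin n) ℝ :=
  Matrix.of fun r c => ∏ j, F j (r j) (c j)

/-- The `k`-fold Kronecker power `X^{⊗k}`. -/
def kronPow {n : ℕ} (k : ℕ) (X : Matrix (Fin n) (Fin n) ℝ) :
    Matrix (Fin k → Fin n) (Fin k → Fin n) ℝ :=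
  posKron fun _ => X

/-- Number of columns of the `j`-th Kronecker factor in the `i`-th block of `M_k^B(A)`. -/
def mCol (q p n : ℕ) {k : ℕ} (i j : Fin k) : ℕ :=
  if j < i then q else if j = i then p else n

/-- The `i`-th block `B^{⊗(i-1)} ⊗ A ⊗ I_n^{⊗(k-i)}` of `M_k^B(A)`. -/
def mBlock {n p q k : ℕ} (B : Matrix (Fin n) (Fin q) ℝ) (A : Matrix (Fin n) (Fin p) ℝ)
    (i : Fin k) : Matrix (Fin k → Fin n) (∀ j : Fin k, Fin (mCol q p n i j)) ℝ :=
  Matrix.of fun r c => ∏ j : Fin k,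
    if h1 : j < i then B (r j) (Fin.cast (by simp [mCol, h1]) (c j))
    else if h2 : j = i then A (r j) (Fin.cast (by simp [mCol, h1, h2]) (c j))
    else (1 : Matrix (Fin n) (Fin n) ℝ) (r j) (Fin.cast (by simp [mCol, h1, h2]) (c j))

/-- The horizontal block concatenation `M_k^B(A)`, with blocks indexed by `i : Fin k`. -/
def mFull {n p q : ℕ} (k : ℕ) (B : Matrix (Fin n) (Fin q) ℝ) (A : Matrix (Fin n) (Fin p) ℝ) :
    Matrix (Fin k → Fin n) (Σ i : Fin k, ∀ j : Fin k, Fin (mCol q p n i j)) ℝ :=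
  Matrix.of fun r c => mBlock B A c.1 r c.2

lemma Fintype.prod_sub_prod_eq_sum {R ι : Type*} [CommRing R] [Fintype ι] [LinearOrder ι]
    (f g : ι → R) :
    ∏ j, g j - ∏ j, f j =
      ∑ i, ∏ j, if j < i then f j else if j = i then g j - f j else g j := by
  have hsplit : ∀ i, (∏ j, if j < i then f j else if j = i then g j - f j else g j) =
      (g i - f i) * (∏ j with j < i, f j) * ∏ j with i < j, g j := by
    intro i
    have hpiece : ∀ j, (if j < i then f j else if j = i then g j - f j else g j) =
        (if i = j then g j - f j else 1) * (if j < i then f j else 1) *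
          (if i < j then g j else 1) := by
      intro j
      rcases lt_trichotomy j i with h | rfl | h
      · simp [h, h.ne', h.not_gt]
      · simp
      · simp [h, h.ne, h.ne', h.not_gt]
    simp only [hpiece, Finset.prod_mul_distrib, Finset.prod_ite_eq, Finset.mem_univ,
      if_true, Finset.prod_filter]
  have h := Finset.prod_add_ordered Finset.univ g (f - g)
  simp only [Pi.sub_apply, add_sub_cancel] at h
  rw [h, sub_add_cancel_left, ← Finset.sum_neg_distrib]
  exact Finset.sum_congr rfl fun i _ => by rw [hsplit]; ring

section PiKron

variable {R ι : Type*} [Fintype ι]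

def piKron [CommMonoid R] {α β : ι → Type*} (F : ∀ j, Matrix (α j) (β j) R) :
    Matrix (∀ j, α j) (∀ j, β j) R :=
  Matrix.of fun r c => ∏ j, F j (r j) (c j)

lemma piKron_mul_piKron [CommSemiring R] [DecidableEq ι] {α β γ : ι → Type*} [∀ j, Fintype (β j)]
    (F : ∀ j, Matrix (α j) (β j) R) (G : ∀ j, Matrix (β j) (γ j) R) :
    piKron F * piKron G = piKron fun j => F j * G j := by
  ext r c
  simp only [piKron, mul_apply, of_apply, ← Finset.prod_mul_distrib]
  rw [Finset.prod_univ_sum, Fintype.piFinset_univ]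

lemma piKron_eq_zero [CommSemiring R] {α β : ι → Type*} (F : ∀ j, Matrix (α j) (β j) R) (i : ι)
    (h : F i = 0) : piKron F = 0 := by
  ext r c
  exact Finset.prod_eq_zero (Finset.mem_univ i) (by simp [h])

lemma piKron_one [CommSemiring R] {α : ι → Type*} [∀ j, DecidableEq (α j)] :
    piKron (fun j => (1 : Matrix (α j) (α j) R)) = 1 := by
  ext r c
  simp [piKron, one_apply, Finset.prod_boole, funext_iff]

lemma one_sub_piKron_const [CommRing R] [LinearOrder ι] {α : Type*} [Fintype α] [DecidableEq α]
    (X : Matrix α α R) :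
    1 - piKron (fun _ : ι => X) =
      ∑ i, piKron fun j => if j < i then X else if j = i then 1 - X else 1 := by
  ext r c
  rw [← piKron_one, Matrix.sub_apply, Matrix.sum_apply]
  simp only [piKron, of_apply]
  rw [Fintype.prod_sub_prod_eq_sum]
  refine Finset.sum_congr rfl fun i _ => Finset.prod_congr rfl fun j _ => ?_
  split_ifs <;> rfl

end PiKron

section MBlock

variable {R : Type*} [CommSemiring R] {n p q k : ℕ}

def mBlockFactor (B : Matrix (Fin n) (Fin q) R) (A : Matrix (Fin n) (Fin p) R) (i j : Fin k) :
    Matrix (Fin n) (Fin (mCol q p n i j)) R :=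
  Matrix.of fun a b =>
    if h1 : j < i then B a (Fin.cast (by simp [mCol, h1]) b)
    else if h2 : j = i then A a (Fin.cast (by simp [mCol, h2]) b)
    else (1 : Matrix (Fin n) (Fin n) R) a (Fin.cast (by simp [mCol, h1, h2]) b)

lemma mBlock_eq_piKron (B : Matrix (Fin n) (Fin q) ℝ) (A : Matrix (Fin n) (Fin p) ℝ)
    (i : Fin k) : mBlock B A i = piKron (mBlockFactor B A i) := rfl

lemma mBlockFactor_mul_transpose (B B' : Matrix (Fin n) (Fin q) R)
    (A A' : Matrix (Fin n) (Fin p) R) (i j : Fin k) :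
    mBlockFactor B A i j * (mBlockFactor B' A' i j)ᵀ =
      if j < i then B * B'ᵀ else if j = i then A * A'ᵀ else 1 := by
  ext a b
  simp only [mBlockFactor, mul_apply, transpose_apply, of_apply]
  split_ifs with h1 h2
  · exact Fin.sum_congr' (fun m => B a m * B' b m) _
  · exact Fin.sum_congr' (fun m => A a m * A' b m) _
  · rw [Fin.sum_congr' (fun m => (1 : Matrix (Fin n) (Fin n) R) a m * (1 : Matrix _ _ R) b m)]
    simp [one_apply]

lemma mul_mBlockFactor_self_eq_zero {X : Matrix (Fin n) (Fin n) R}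
    (B : Matrix (Fin n) (Fin q) R) {A : Matrix (Fin n) (Fin p) R} (h : X * A = 0) (i : Fin k) :
    X * mBlockFactor B A i i = 0 := by
  ext a b
  simp only [mBlockFactor, mul_apply, of_apply, lt_irrefl, dif_pos, dite_false,
    Matrix.zero_apply]
  exact congr_fun (congr_fun h a) _

lemma kronPow_eq_piKron (X : Matrix (Fin n) (Fin n) ℝ) :
    kronPow k X = piKron fun _ => X := rfl

lemma kronPow_mul_mBlock_eq_zero {X : Matrix (Fin n) (Fin n) ℝ} (B : Matrix (Fin n) (Fin q) ℝ)
    {A : Matrix (Fin n) (Fin p) ℝ} (h : X * A = 0) (i : Fin k) :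
    kronPow k X * mBlock B A i = 0 := by
  rw [kronPow_eq_piKron, mBlock_eq_piKron, piKron_mul_piKron]
  exact piKron_eq_zero _ i (mul_mBlockFactor_self_eq_zero B h i)

/-- Telescoping gives `1 - X^{⊗k} = ∑ᵢ X^{⊗(i-1)} ⊗ (1 - X) ⊗ I^{⊗(k-i)}`, and `1 - X = A Q`
splits the `i`-th term as the `i`-th block of `M_k(A)` times `X^{⊗(i-1)} ⊗ Q ⊗ I^{⊗(k-i)}`,
which is `piKron` of the transposed factors of `M_k^{Xᵀ}(Qᵀ)`. -/
lemma one_sub_kronPow_eq_sum_mBlock_mul {X : Matrix (Fin n) (Fin n) ℝ}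
    {A : Matrix (Fin n) (Fin p) ℝ} {Q : Matrix (Fin p) (Fin n) ℝ} (h : A * Q = 1 - X) :
    1 - kronPow k X =
      ∑ i, mBlock (1 : Matrix (Fin n) (Fin n) ℝ) A i *
        piKron fun j => (mBlockFactor Xᵀ Qᵀ i j)ᵀ := by
  rw [kronPow_eq_piKron, one_sub_piKron_const]
  refine Finset.sum_congr rfl fun i _ => ?_
  rw [mBlock_eq_piKron, piKron_mul_piKron]
  congr 1
  funext j
  rw [mBlockFactor_mul_transpose, transpose_transpose, transpose_transpose, one_mul, h]

theorem mulVec_kronPow_eq_zero_iff {X : Matrix (Fin n) (Fin n) ℝ}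
    {A : Matrix (Fin n) (Fin p) ℝ} {Q : Matrix (Fin p) (Fin n) ℝ}
    (hXA : X * A = 0) (hAQ : A * Q = 1 - X) (z : (Fin k → Fin n) → ℝ) :
    kronPow k X *ᵥ z = 0 ↔
      ∃ γ : ∀ i : Fin k, (∀ j : Fin k, Fin (mCol n p n i j)) → ℝ,
        z = ∑ i, mBlock (1 : Matrix (Fin n) (Fin n) ℝ) A i *ᵥ γ i := by
  constructor
  · intro hz
    refine ⟨fun i => (piKron fun j => (mBlockFactor Xᵀ Qᵀ i j)ᵀ) *ᵥ z, ?_⟩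
    calc z = (1 - kronPow k X) *ᵥ z := by rw [sub_mulVec, hz, one_mulVec, sub_zero]
      _ = _ := by
        simp only [one_sub_kronPow_eq_sum_mBlock_mul hAQ, sum_mulVec, mulVec_mulVec]
  · rintro ⟨γ, rfl⟩
    simp [mulVec_sum, mulVec_mulVec, kronPow_mul_mBlock_eq_zero 1 hXA]

end MBlock

lemma one_sub_mul_inv_mul_mul_self_eq_zero {R m n : Type*} [CommRing R] [Fintype m]
    [DecidableEq m] [Fintype n] [DecidableEq n] (A : Matrix m n R) (C : Matrix n m R)
    (h : IsUnit (C * A)) : (1 - A * (C * A)⁻¹ * C) * A = 0 := by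
  rw [Matrix.sub_mul, Matrix.one_mul, Matrix.mul_assoc _ C A,
    nonsing_inv_mul_cancel_right _ A ((isUnit_iff_isUnit_det _).mp h), sub_self]

theorem stmt9_general {n1 n2 : ℕ} (E11 : Matrix (Fin n1) (Fin n1) ℝ)
    (A12 : Matrix (Fin n1) (Fin n2) ℝ)
    (hS : IsUnit (A12ᵀ * E11⁻¹ * A12))
    (Proj : Matrix (Fin n1) (Fin n1) ℝ)
    (hProj : Proj = 1 - A12 * (A12ᵀ * E11⁻¹ * A12)⁻¹ * A12ᵀ * E11⁻¹)
    (k : ℕ) (z : (Fin k → Fin n1) → ℝ) :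
    (kronPow k Proj).mulVec z = 0 ↔
      ∃ γ : ∀ i : Fin k, (∀ j : Fin k, Fin (mCol n1 n2 n1 i j)) → ℝ,
        z = ∑ i : Fin k,
          (mBlock (1 : Matrix (Fin n1) (Fin n1) ℝ) A12 i).mulVec (γ i) := by
  have hP : Proj = 1 - A12 * (A12ᵀ * E11⁻¹ * A12)⁻¹ * (A12ᵀ * E11⁻¹) := by
    rw [hProj, Matrix.mul_assoc (A12 * _)]
  refine mulVec_kronPow_eq_zero_iff (Q := (A12ᵀ * E11⁻¹ * A12)⁻¹ * (A12ᵀ * E11⁻¹)) ?_ ?_ z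
  · rw [hP]
    exact one_sub_mul_inv_mul_mul_self_eq_zero A12 _ hS
  · rw [hP, sub_sub_cancel]
    exact (Matrix.mul_assoc _ _ _).symm

/-- With `Π = I - A12 (A12ᵀ E11⁻¹ A12)⁻¹ A12ᵀ E11⁻¹`, for every positive integer `k`
and `z ∈ ℝ^{n1^k}` one has `Π^{⊗k} z = 0` iff `z` lies in the column space of
`M_k(A12)`, i.e. iff there exist `γ_1, …, γ_k` with
`z = ∑_{i=1}^{k} (I^{⊗(i-1)} ⊗ A12 ⊗ I^{⊗(k-i)}) γ_i`. -/
theorem stmt9 {n1 n2 : ℕ} (E11 : Matrix (Fin n1) (Fin n1) ℝ) (hE : IsUnit E11)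
    (A12 : Matrix (Fin n1) (Fin n2) ℝ) (hA : A12.rank = n2)
    (hS : IsUnit (A12ᵀ * E11⁻¹ * A12))
    (Proj : Matrix (Fin n1) (Fin n1) ℝ)
    (hProj : Proj = 1 - A12 * (A12ᵀ * E11⁻¹ * A12)⁻¹ * A12ᵀ * E11⁻¹)
    (k : ℕ) (hk : 0 < k) (z : (Fin k → Fin n1) → ℝ) :
    (kronPow k Proj).mulVec z = 0 ↔
      ∃ γ : ∀ i : Fin k, (∀ j : Fin k, Fin (mCol n1 n2 n1 i j)) → ℝ,
        z = ∑ i : Fin k,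
          (mBlock (1 : Matrix (Fin n1) (Fin n1) ℝ) A12 i).mulVec (γ i) :=
  stmt9_general E11 A12 hS Proj hProj k z
end
end

section
/- Let A12 ∈ ℝ^{n1×n2} have full column rank and R = I_{n1} − A12(A12ᵀA12)⁻¹A12ᵀ. Then for every positive integer k and every vector z ∈ ℝ^{n1^k}, one has M_k(A12)ᵀ z = 0 (i.e. z is orthogonal to every column of M_k(A12)) if and only if R^{⊗k} z = z. -/
/-!
Write `M_k(A)` blockwise, its `i`-th block `Mᵢ = I^{⊗(i-1)} ⊗ A ⊗ I^{⊗(k-i)}` being a Kronecker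
product. By the mixed-product rule, `Mᵢᵀ R^{⊗k}` has the factor `AᵀR = 0`, so `R^{⊗k} z = z`
forces `M_k(A)ᵀ z = 0`. Conversely, `R^{⊗k}` is the product over `i` of the operators `Rᵢ`
acting by `R` in slot `i` only, and `Rᵢ = 1 - Mᵢ' Mᵢᵀ` where `Mᵢ'` is the `i`-th block of
`M_k(A (AᵀA)⁻¹)`; hence each `Rᵢ`, and so `R^{⊗k}`, fixes every `z` with `M_k(A)ᵀ z = 0`.
-/

open Matrix

noncomputable section

namespace Matrix

section PiKron

variable {ι R : Type*} [Fintype ι] [CommSemiring R] {α β γ : ι → Type*}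

def piKron (F : ∀ j, Matrix (α j) (β j) R) : Matrix (∀ j, α j) (∀ j, β j) R :=
  of fun r c => ∏ j, F j (r j) (c j)

@[simp]
theorem piKron_apply (F : ∀ j, Matrix (α j) (β j) R) (r : ∀ j, α j) (c : ∀ j, β j) :
    piKron F r c = ∏ j, F j (r j) (c j) :=
  rfl

theorem transpose_piKron (F : ∀ j, Matrix (α j) (β j) R) :
    (piKron F)ᵀ = piKron fun j => (F j)ᵀ :=
  rfl

theorem piKron_mul [DecidableEq ι] [∀ j, Fintype (β j)] (F : ∀ j, Matrix (α j) (β j) R)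
    (G : ∀ j, Matrix (β j) (γ j) R) : piKron F * piKron G = piKron fun j => F j * G j := by
  ext r c
  simp only [mul_apply, piKron_apply, ← Finset.prod_mul_distrib, Fintype.prod_sum]

theorem piKron_one [∀ j, DecidableEq (α j)] [DecidableEq (∀ j, α j)] :
    piKron (fun j => (1 : Matrix (α j) (α j) R)) = 1 := by
  ext r c
  simp only [piKron_apply, one_apply, Fintype.prod_boole, funext_iff]

theorem piKron_eq_zero (F : ∀ j, Matrix (α j) (β j) R) (i : ι) (hi : F i = 0) :
    piKron F = 0 := by
  ext r c
  exact Finset.prod_eq_zero (Finset.mem_univ i) (by simp [hi])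

theorem piKron_update_add [DecidableEq ι] (F : ∀ j, Matrix (α j) (β j) R) (i : ι)
    (X Y : Matrix (α i) (β i) R) :
    piKron (Function.update F i (X + Y)) =
      piKron (Function.update F i X) + piKron (Function.update F i Y) := by
  ext r c
  have hrest (Z : Matrix (α i) (β i) R) :
      ∏ j ∈ {i}ᶜ, Function.update F i Z j (r j) (c j) = ∏ j ∈ {i}ᶜ, F j (r j) (c j) :=
    Finset.prod_congr rfl fun j hj => by rw [Function.update_of_ne (by simpa using hj)]
  simp only [piKron_apply, add_apply, Fintype.prod_eq_mul_prod_compl i, Function.update_self,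
    hrest, add_mul]

end PiKron

section Blocks

variable {n p q k : ℕ}

def mBlockFactor (B : Matrix (Fin n) (Fin q) ℝ) (A : Matrix (Fin n) (Fin p) ℝ) (i j : Fin k) :
    Matrix (Fin n) (Fin (mCol q p n i j)) ℝ :=
  of fun u v =>
    if h1 : j < i then B u (Fin.cast (by simp [mCol, h1]) v)
    else if h2 : j = i then A u (Fin.cast (by simp [mCol, h2]) v)
    else (1 : Matrix (Fin n) (Fin n) ℝ) u (Fin.cast (by simp [mCol, h1, h2]) v)

theorem mBlock_eq_piKron (B : Matrix (Fin n) (Fin q) ℝ) (A : Matrix (Fin n) (Fin p) ℝ)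
    (i : Fin k) : mBlock B A i = piKron (mBlockFactor B A i) :=
  rfl

theorem posKron_eq_piKron (F : Fin k → Matrix (Fin n) (Fin n) ℝ) : posKron F = piKron F :=
  rfl

theorem mBlockFactor_of_lt (B : Matrix (Fin n) (Fin q) ℝ) (A : Matrix (Fin n) (Fin p) ℝ)
    {i j : Fin k} (h : j < i) :
    mBlockFactor B A i j = B.submatrix id (finCongr (by simp [mCol, h])) := by
  ext u v
  simp [mBlockFactor, h]

theorem mBlockFactor_self (B : Matrix (Fin n) (Fin q) ℝ) (A : Matrix (Fin n) (Fin p) ℝ)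
    (i : Fin k) : mBlockFactor B A i i = A.submatrix id (finCongr (by simp [mCol])) := by
  ext u v
  simp [mBlockFactor]

theorem mBlockFactor_of_gt (B : Matrix (Fin n) (Fin q) ℝ) (A : Matrix (Fin n) (Fin p) ℝ)
    {i j : Fin k} (h : i < j) :
    mBlockFactor B A i j = (1 : Matrix (Fin n) (Fin n) ℝ).submatrix id
      (finCongr (by simp [mCol, h.not_gt, h.ne'])) := by
  ext u v
  simp only [mBlockFactor, of_apply, submatrix_apply, dif_neg h.not_gt, dif_neg h.ne']
  rfl

theorem mBlock_mul_transpose_mBlock (B B' : Matrix (Fin n) (Fin q) ℝ)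
    (A A' : Matrix (Fin n) (Fin p) ℝ) (i : Fin k) :
    mBlock B A i * (mBlock B' A' i)ᵀ =
      posKron fun j => if j < i then B * B'ᵀ else if j = i then A * A'ᵀ else 1 := by
  rw [mBlock_eq_piKron, mBlock_eq_piKron, transpose_piKron, piKron_mul, posKron_eq_piKron]
  congr 1
  funext j
  rcases lt_trichotomy j i with h | rfl | h
  · simp [mBlockFactor_of_lt _ _ h, h, transpose_submatrix]
  · simp [mBlockFactor_self, transpose_submatrix]
  · simp [mBlockFactor_of_gt _ _ h, h.not_gt, h.ne', transpose_submatrix]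

theorem transpose_mBlock_mul_posKron_eq_zero (B : Matrix (Fin n) (Fin q) ℝ)
    (A : Matrix (Fin n) (Fin p) ℝ) {i : Fin k} {F : Fin k → Matrix (Fin n) (Fin n) ℝ}
    (h : Aᵀ * F i = 0) : (mBlock B A i)ᵀ * posKron F = 0 := by
  rw [mBlock_eq_piKron, transpose_piKron, posKron_eq_piKron, piKron_mul]
  refine piKron_eq_zero _ i ?_
  rw [mBlockFactor_self, transpose_submatrix, ← submatrix_id_id (F i),
    ← submatrix_mul _ _ _ _ _ Function.bijective_id, h]
  simp only [submatrix_zero, Pi.zero_apply]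

theorem transpose_mFull_mulVec_eq_zero_iff (B : Matrix (Fin n) (Fin q) ℝ)
    (A : Matrix (Fin n) (Fin p) ℝ) (z : (Fin k → Fin n) → ℝ) :
    (mFull k B A)ᵀ *ᵥ z = 0 ↔ ∀ i, (mBlock B A i)ᵀ *ᵥ z = 0 := by
  simp only [funext_iff, Sigma.forall]
  rfl

end Blocks

theorem isUnit_of_rank_eq_card {m K : Type*} [Fintype m] [DecidableEq m] [Field K]
    {A : Matrix m m K} (h : A.rank = Fintype.card m) : IsUnit A := by
  rw [← mulVec_surjective_iff_isUnit]
  have hrange : LinearMap.range A.mulVecLin = ⊤ := by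
    apply Submodule.eq_top_of_finrank_eq
    rw [← rank, h, Module.finrank_fintype_fun_eq_card]
  exact LinearMap.range_eq_top.mp hrange

theorem transpose_mul_one_sub_proj_eq_zero {m n K : Type*} [Fintype m] [Fintype n]
    [DecidableEq m] [DecidableEq n] [Field K] [LinearOrder K] [IsStrictOrderedRing K]
    {A : Matrix m n K} (hA : A.rank = Fintype.card n) :
    Aᵀ * (1 - A * (Aᵀ * A)⁻¹ * Aᵀ) = 0 := by
  have hdet : IsUnit (Aᵀ * A).det :=
    (isUnit_iff_isUnit_det _).mp (isUnit_of_rank_eq_card (by rw [rank_transpose_mul_self, hA]))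
  rw [Matrix.mul_sub, Matrix.mul_one, ← Matrix.mul_assoc, ← Matrix.mul_assoc,
    mul_nonsing_inv _ hdet, Matrix.one_mul, sub_self]

section Kronecker

variable {n k : ℕ}

theorem kronPow_mulVec_eq_self {X : Matrix (Fin n) (Fin n) ℝ} {z : (Fin k → Fin n) → ℝ}
    (h : ∀ i, posKron (Pi.mulSingle i X) *ᵥ z = z) : kronPow k X *ᵥ z = z := by
  classical
  suffices ∀ s : Finset (Fin k), posKron (fun j => if j ∈ s then X else 1) *ᵥ z = z by
    simpa [kronPow] using this Finset.univ
  intro s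
  induction s using Finset.induction_on with
  | empty => simp [posKron_eq_piKron, piKron_one]
  | insert i s hi ih =>
    have hsplit : posKron (fun j => if j ∈ insert i s then X else 1) =
        posKron (Pi.mulSingle i X) * posKron (fun j => if j ∈ s then X else 1) := by
      rw [posKron_eq_piKron, posKron_eq_piKron, posKron_eq_piKron, piKron_mul]
      congr 1
      funext j
      by_cases hj : j = i
      · subst hj; simp [hi]
      · simp [hj]
    rw [hsplit, ← mulVec_mulVec, ih, h]

theorem posKron_mulSingle_add (i : Fin k) (X Y : Matrix (Fin n) (Fin n) ℝ) :
    posKron (Pi.mulSingle i (X + Y)) = posKron (Pi.mulSingle i X) + posKron (Pi.mulSingle i Y) :=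
  piKron_update_add (α := fun _ => Fin n) (β := fun _ => Fin n) 1 i X Y

theorem kronPow_mulVec_eq_self_of_transpose_mFull_mulVec_eq_zero {p : ℕ}
    {A : Matrix (Fin n) (Fin p) ℝ} (S : Matrix (Fin p) (Fin p) ℝ) {z : (Fin k → Fin n) → ℝ}
    (hz : (mFull k (1 : Matrix (Fin n) (Fin n) ℝ) A)ᵀ *ᵥ z = 0) :
    kronPow k (1 - A * S * Aᵀ) *ᵥ z = z := by
  refine kronPow_mulVec_eq_self fun i => ?_
  have hsum : posKron (Pi.mulSingle i (1 - A * S * Aᵀ)) + posKron (Pi.mulSingle i (A * S * Aᵀ))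
      = 1 := by
    rw [← posKron_mulSingle_add, sub_add_cancel, Pi.mulSingle_one, posKron_eq_piKron]
    exact piKron_one
  have hblock : posKron (Pi.mulSingle i (A * S * Aᵀ)) =
      mBlock (1 : Matrix (Fin n) (Fin n) ℝ) (A * S) i *
        (mBlock (1 : Matrix (Fin n) (Fin n) ℝ) A i)ᵀ := by
    rw [mBlock_mul_transpose_mBlock]
    congr 1
    funext j
    rcases lt_trichotomy j i with h | rfl | h
    · simp [h, h.ne]
    · simp
    · simp [h.not_gt, h.ne']
  rw [eq_sub_of_add_eq hsum, sub_mulVec, one_mulVec, hblock, ← mulVec_mulVec,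
    (transpose_mFull_mulVec_eq_zero_iff 1 A z).mp hz i, mulVec_zero, sub_zero]

theorem transpose_mFull_mulVec_eq_zero_of_kronPow_mulVec_eq_self {p q : ℕ}
    (B : Matrix (Fin n) (Fin q) ℝ) {A : Matrix (Fin n) (Fin p) ℝ} {X : Matrix (Fin n) (Fin n) ℝ}
    (hX : Aᵀ * X = 0) {z : (Fin k → Fin n) → ℝ} (hz : kronPow k X *ᵥ z = z) :
    (mFull k B A)ᵀ *ᵥ z = 0 := by
  refine (transpose_mFull_mulVec_eq_zero_iff B A z).mpr fun i => ?_
  rw [← hz, mulVec_mulVec, kronPow, transpose_mBlock_mul_posKron_eq_zero B A hX, zero_mulVec]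

end Kronecker

end Matrix

theorem stmt11_general {n1 n2 : ℕ} (A12 : Matrix (Fin n1) (Fin n2) ℝ) (hA : A12.rank = n2)
    (R : Matrix (Fin n1) (Fin n1) ℝ)
    (hR : R = 1 - A12 * (A12ᵀ * A12)⁻¹ * A12ᵀ)
    (k : ℕ) (z : (Fin k → Fin n1) → ℝ) :
    (mFull k (1 : Matrix (Fin n1) (Fin n1) ℝ) A12)ᵀ.mulVec z = 0
      ↔ (kronPow k R).mulVec z = z := by
  subst hR
  have hAR := transpose_mul_one_sub_proj_eq_zero (hA.trans (Fintype.card_fin n2).symm)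
  exact ⟨kronPow_mulVec_eq_self_of_transpose_mFull_mulVec_eq_zero _,
    transpose_mFull_mulVec_eq_zero_of_kronPow_mulVec_eq_self 1 hAR⟩

/-- Let `A12 ∈ ℝ^{n1×n2}` have full column rank and `R = I - A12 (A12ᵀ A12)⁻¹ A12ᵀ`.
For every positive integer `k` and `z ∈ ℝ^{n1^k}`, `M_k(A12)ᵀ z = 0` iff
`R^{⊗k} z = z`. -/
theorem stmt11 {n1 n2 : ℕ} (A12 : Matrix (Fin n1) (Fin n2) ℝ) (hA : A12.rank = n2)
    (R : Matrix (Fin n1) (Fin n1) ℝ)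
    (hR : R = 1 - A12 * (A12ᵀ * A12)⁻¹ * A12ᵀ)
    (k : ℕ) (hk : 0 < k) (z : (Fin k → Fin n1) → ℝ) :
    (mFull k (1 : Matrix (Fin n1) (Fin n1) ℝ) A12)ᵀ.mulVec z = 0
      ↔ (kronPow k R).mulVec z = z :=
  stmt11_general A12 hA R hR k z
end
end
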